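/- For m ≥ 3, the Nimber of the Toggle position on the generalized Petersen graph P(m,1) in which every vertex has weight 1 equals mex{ G(H_{m+1}) }; equivalently, it equals 1 if G(H_{m+1}) = 0 and equals 0 if G(H_{m+1}) ≥ 1, where G(H_{m+1}) is the Nimber of the Toggle position H_{m+1}. -/

import Mathlib

namespace Toggle

variable {V : Type*} [Fintype V] [DecidableEq V]

/-- The closed neighborhood `N[v]` of a vertex as a `Finset`. -/
def closedNbhd (G : SimpleGraph V) [DecidableRel G.Adj] (v : V) : Finset V :=
  insert v (G.neighborFinset v)

/-- The result of a Toggle move at `v`: flip the weight of every vertex in `N[v]`. -/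
def move (G : SimpleGraph V) [DecidableRel G.Adj] (ω : V → Bool) (v : V) : V → Bool :=
  fun u => if u ∈ closedNbhd G v then !(ω u) else ω u

/-- Total weight of a position. -/
def weight (ω : V → Bool) : ℕ := (Finset.univ.filter (fun u => ω u = true)).card

/-- Weight of a position over the closed neighborhood of `v`. -/
def nbhdWeight (G : SimpleGraph V) [DecidableRel G.Adj] (ω : V → Bool) (v : V) : ℕ :=
  ((closedNbhd G v).filter (fun u => ω u = true)).card

/-- A Toggle move at `v` is legal iff `ω v = 1` and the move strictly decreases the
weight over `N[v]`. -/
def IsLegal (G : SimpleGraph V) [DecidableRel G.Adj] (ω : V → Bool) (v : V) : Prop :=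
  ω v = true ∧ nbhdWeight G (move G ω v) v < nbhdWeight G ω v

instance (G : SimpleGraph V) [DecidableRel G.Adj] (ω : V → Bool) (v : V) :
    Decidable (IsLegal G ω v) :=
  inferInstanceAs (Decidable (ω v = true ∧ nbhdWeight G (move G ω v) v < nbhdWeight G ω v))

theorem weight_move_lt (G : SimpleGraph V) [DecidableRel G.Adj] {ω : V → Bool} {v : V}
    (h : IsLegal G ω v) : weight (move G ω v) < weight ω := by
  have key : ∀ ψ : V → Bool,
      weight ψ = ((closedNbhd G v).filter (fun u => ψ u = true)).card
        + ((Finset.univ \ closedNbhd G v).filter (fun u => ψ u = true)).card := by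
    intro ψ
    rw [weight, ← Finset.card_union_of_disjoint
      (Finset.disjoint_filter_filter Finset.disjoint_sdiff)]
    congr 1
    ext u
    simp only [Finset.mem_filter, Finset.mem_union, Finset.mem_sdiff, Finset.mem_univ,
      true_and]
    tauto
  have hout : ((Finset.univ \ closedNbhd G v).filter (fun u => move G ω v u = true))
      = ((Finset.univ \ closedNbhd G v).filter (fun u => ω u = true)) := by
    apply Finset.filter_congr
    intro u hu
    rw [Finset.mem_sdiff] at hu
    simp [move, hu.2]
  have h2 := h.2
  rw [key (move G ω v), key ω, hout]
  unfold nbhdWeight at h2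
  omega

/-- Minimal excludant of a finite set of naturals. -/
noncomputable def mex (s : Finset ℕ) : ℕ := sInf {n : ℕ | n ∉ s}

/-- The Nimber (Grundy value) of a Toggle position. -/
noncomputable def grundy (G : SimpleGraph V) [DecidableRel G.Adj] (ω : V → Bool) : ℕ :=
  mex ((Finset.univ.filter (fun v => IsLegal G ω v)).attach.image
    (fun v => grundy G (move G ω v.1)))
termination_by weight ω
decreasing_by
  have hv := v.2
  rw [Finset.mem_filter] at hv
  exact weight_move_lt G hv.2

/-- One legal Toggle move transforms `ω` into `ω'`. -/
def Step (G : SimpleGraph V) [DecidableRel G.Adj] (ω ω' : V → Bool) : Prop :=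
  ∃ v, IsLegal G ω v ∧ ω' = move G ω v

/-- `ω'` is reachable from `ω` by a (possibly empty) sequence of legal moves. -/
def Reach (G : SimpleGraph V) [DecidableRel G.Adj] (ω ω' : V → Bool) : Prop :=
  Relation.ReflTransGen (Step G) ω ω'

/-- `v` is terminally unplayable at `ω`: unplayable at `ω` and at every position
reachable from `ω`. -/
def TerminallyUnplayable (G : SimpleGraph V) [DecidableRel G.Adj] (ω : V → Bool) (v : V) :
    Prop :=
  ∀ ω', Reach G ω ω' → ¬ IsLegal G ω' v

/-- `v` is penultimately unplayable for the initial position `ω₀`: at every position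
reachable from `ω₀`, after any legal move at a vertex `u ∈ N[v]`, the vertex `v` is
terminally unplayable. -/
def PenultimatelyUnplayableAt (G : SimpleGraph V) [DecidableRel G.Adj] (ω₀ : V → Bool)
    (v : V) : Prop :=
  ∀ ω', Reach G ω₀ ω' → ∀ u ∈ closedNbhd G v, IsLegal G ω' u →
    TerminallyUnplayable G (move G ω' u) v

/-- The position `ω₀` is penultimately unplayable if every vertex is. -/
def PenultimatelyUnplayable (G : SimpleGraph V) [DecidableRel G.Adj] (ω₀ : V → Bool) :
    Prop :=
  ∀ v, PenultimatelyUnplayableAt G ω₀ v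

/-- The path graph on `Fin n`, vertices `0, 1, …, n-1` in order. -/
def pathGraph (n : ℕ) : SimpleGraph (Fin n) :=
  SimpleGraph.fromRel (fun a b => (a : ℕ) + 1 = (b : ℕ))

instance (n : ℕ) : DecidableRel (pathGraph n).Adj := fun a b =>
  decidable_of_iff _ (SimpleGraph.fromRel_adj _ a b).symm

/-- The 2×m grid graph `L_{2,m}` (0-indexed rows and columns). -/
def gridGraph (m : ℕ) : SimpleGraph (Fin 2 × Fin m) :=
  SimpleGraph.fromRel (fun a b =>
    (a.1 = b.1 ∧ (a.2 : ℕ) + 1 = (b.2 : ℕ)) ∨ (a.2 = b.2 ∧ (a.1 : ℕ) + 1 = (b.1 : ℕ)))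

instance (m : ℕ) : DecidableRel (gridGraph m).Adj := fun a b =>
  decidable_of_iff _ (SimpleGraph.fromRel_adj _ a b).symm

/-- The generalized Petersen graph `P(m,k)`; the vertex `(0, i)` is the outer vertex
`u_i` and `(1, i)` is the inner vertex `w_i` (0-indexed). -/
def petersen (m k : ℕ) : SimpleGraph (Fin 2 × Fin m) :=
  SimpleGraph.fromRel (fun a b =>
    (a.1 = 0 ∧ b.1 = 0 ∧ ((a.2 : ℕ) + 1) % m = (b.2 : ℕ)) ∨
    (a.1 = 0 ∧ b.1 = 1 ∧ a.2 = b.2) ∨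
    (a.1 = 1 ∧ b.1 = 1 ∧ ((a.2 : ℕ) + k) % m = (b.2 : ℕ)))

instance (m k : ℕ) : DecidableRel (petersen m k).Adj := fun a b =>
  decidable_of_iff _ (SimpleGraph.fromRel_adj _ a b).symm

/-- The position on `P(m,k)` where every outer vertex has weight 1 and every inner
vertex has weight 0. -/
def P01 (m : ℕ) : Fin 2 × Fin m → Bool := fun p => decide (p.1 = 0)

/-- The position on `P(m,k)` where every inner vertex has weight 1 and every outer
vertex has weight 0. -/
def P10 (m : ℕ) : Fin 2 × Fin m → Bool := fun p => decide (p.1 = 1)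

/-- The position where every vertex has weight 1. -/
def P11 (m : ℕ) : Fin 2 × Fin m → Bool := fun _ => true

/-- The Toggle position `H_m` on `L_{2,m}` (columns 0-indexed): for `m ≠ 3`, weight 0
exactly at `(0,0), (0,m-1), (1,0), (1,1), (1,m-2), (1,m-1)`; for `m = 3`, weight 0
exactly at `(0,0), (0,2), (1,0), (1,2)`. -/
def Hpos (m : ℕ) : Fin 2 × Fin m → Bool := fun p =>
  if m = 3 then !(decide ((p.2 : ℕ) = 0 ∨ (p.2 : ℕ) = 2))
  else !(decide ((p.1 = 0 ∧ ((p.2 : ℕ) = 0 ∨ (p.2 : ℕ) = m - 1)) ∨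
                 (p.1 = 1 ∧ ((p.2 : ℕ) ≤ 1 ∨ m - 2 ≤ (p.2 : ℕ)))))

/-- The Toggle position `D_m` on `L_{2,m}` (columns 0-indexed): weight 0 exactly at
`(0,0), (0,m-2), (0,m-1), (1,0), (1,1), (1,m-1)`. -/
def Dpos (m : ℕ) : Fin 2 × Fin m → Bool := fun p =>
  !(decide ((p.1 = 0 ∧ ((p.2 : ℕ) = 0 ∨ m - 2 ≤ (p.2 : ℕ))) ∨
            (p.1 = 1 ∧ ((p.2 : ℕ) ≤ 1 ∨ (p.2 : ℕ) = m - 1))))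

/-- The Nimber of the position `H_m`. -/
noncomputable def GH (m : ℕ) : ℕ := grundy (gridGraph m) (Hpos m)

/-- The Nimber of the position `D_m`. -/
noncomputable def GD (m : ℕ) : ℕ := grundy (gridGraph m) (Dpos m)

/-- The cycle graph `C_m` on `Fin m`. -/
def cycleGraph (m : ℕ) : SimpleGraph (Fin m) :=
  SimpleGraph.fromRel (fun a b => ((a : ℕ) + 1) % m = (b : ℕ))

open scoped Classical in
/-- The Nimber of a position of Jacob's Ladder on `C_m`: a position is the `Finset` of
not-yet-removed vertices, and a move at a remaining vertex `v` removes all remaining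
vertices at distance at most 2 from `v` in `C_m`. -/
noncomputable def jlGrundy (m : ℕ) (S : Finset (Fin m)) : ℕ :=
  mex (S.attach.image (fun v =>
    jlGrundy m (S.filter (fun u => 2 < (cycleGraph m).dist v.1 u))))
termination_by S.card
decreasing_by
  apply Finset.card_lt_card
  rw [Finset.ssubset_iff_of_subset (Finset.filter_subset _ _)]
  exact ⟨v.1, v.2, by simp [SimpleGraph.dist_self]⟩

end Toggle

/-!
In the all-ones position every move on the prism `P(m,1)` is legal, and rotating and swapping the
two cycles acts transitively on the vertices, so all options have the same Nimber: the answer is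
`mex {G(ω₁)}` for the position `ω₁` after the move at `w₀`, in which column `0` has weight `0`.
From `ω₁` on, a legal move at a vertex needs weight `1` there and at two of its three neighbours;
a case analysis shows that this forces the move into a column `2 ≤ i ≤ m - 2` at distance at least
`2` from every earlier move. So column `0` is never touched again, the reachable positions are
described by the set of moves played, and the game is the one on `L_{2,m+1}` obtained by cutting
the prism open along column `0`, starting from `H_{m+1}`.
-/

namespace Toggle

section General

variable {V : Type*} [Fintype V] [DecidableEq V] (G : SimpleGraph V) [DecidableRel G.Adj]

lemma mem_closedNbhd {u v : V} : u ∈ closedNbhd G v ↔ u = v ∨ G.Adj v u := by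
  simp [closedNbhd]

lemma move_apply (ω : V → Bool) (v u : V) :
    move G ω v u = (ω u ^^ decide (u ∈ closedNbhd G v)) := by
  by_cases h : u ∈ closedNbhd G v <;> simp [move, h]

lemma nbhdWeight_move_self (ω : V → Bool) (v : V) :
    nbhdWeight G (move G ω v) v = (closedNbhd G v).card - nbhdWeight G ω v := by
  have hflip : (closedNbhd G v).filter (fun u => move G ω v u = true)
      = (closedNbhd G v).filter (fun u => ¬ ω u = true) :=
    Finset.filter_congr fun u hu => by simp [move, hu]
  rw [nbhdWeight, nbhdWeight, hflip, Finset.filter_not,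
    Finset.card_sdiff_of_subset (Finset.filter_subset _ _)]

lemma isLegal_iff_card_lt (ω : V → Bool) (v : V) :
    IsLegal G ω v ↔ ω v = true ∧ (closedNbhd G v).card < 2 * nbhdWeight G ω v := by
  have hle : nbhdWeight G ω v ≤ (closedNbhd G v).card := Finset.card_filter_le _ _
  rw [IsLegal, nbhdWeight_move_self]
  exact and_congr_right fun _ => by omega

lemma isLegal_iff_of_closedNbhd_eq {v x y z : V} (hN : closedNbhd G v = {v, x, y, z})
    (hvx : v ≠ x) (hvy : v ≠ y) (hvz : v ≠ z) (hxy : x ≠ y) (hxz : x ≠ z) (hyz : y ≠ z)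
    (ω : V → Bool) :
    IsLegal G ω v ↔ ω v = true ∧ 2 ≤ (ω x).toNat + (ω y).toNat + (ω z).toNat := by
  have hcard : (closedNbhd G v).card = 4 := by
    rw [hN, Finset.card_insert_of_notMem (by simp [hvx, hvy, hvz]),
      Finset.card_insert_of_notMem (by simp [hxy, hxz]),
      Finset.card_insert_of_notMem (by simp [hyz]), Finset.card_singleton]
  have hweight : nbhdWeight G ω v = (ω v).toNat + (ω x).toNat + (ω y).toNat + (ω z).toNat := by
    rw [nbhdWeight, hN, Finset.card_filter, Finset.sum_insert (by simp [hvx, hvy, hvz]),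
      Finset.sum_insert (by simp [hxy, hxz]), Finset.sum_insert (by simp [hyz]),
      Finset.sum_singleton]
    cases ω v <;> cases ω x <;> cases ω y <;> cases ω z <;> rfl
  rw [isLegal_iff_card_lt, hcard, hweight]
  cases ω v <;> simp; omega

lemma isLegal_allTrue (v : V) : IsLegal G (fun _ => true) v := by
  have hweight : nbhdWeight G (fun _ => true) v = (closedNbhd G v).card := by
    simp [nbhdWeight]
  have hpos : 0 < (closedNbhd G v).card := Finset.card_pos.mpr ⟨v, by simp [closedNbhd]⟩
  rw [isLegal_iff_card_lt, hweight]
  exact ⟨rfl, by omega⟩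

variable {G} {W : Type*} [Fintype W] [DecidableEq W] {G' : SimpleGraph W} [DecidableRel G'.Adj]

lemma grundy_eq_of_bisim (R : (V → Bool) → (W → Bool) → Prop)
    (hforth : ∀ ω ψ, R ω ψ → ∀ v, IsLegal G ω v →
      ∃ w, IsLegal G' ψ w ∧ R (move G ω v) (move G' ψ w))
    (hback : ∀ ω ψ, R ω ψ → ∀ w, IsLegal G' ψ w →
      ∃ v, IsLegal G ω v ∧ R (move G ω v) (move G' ψ w))
    {ω : V → Bool} {ψ : W → Bool} (h : R ω ψ) : grundy G ω = grundy G' ψ := by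
  induction hn : weight ω using Nat.strong_induction_on generalizing ω ψ with
  | _ n ih =>
  rw [grundy, grundy]
  congr 1
  ext g
  simp only [Finset.mem_image, Finset.mem_attach, true_and, Subtype.exists,
    Finset.mem_filter, Finset.mem_univ]
  constructor
  · rintro ⟨v, hv, rfl⟩
    obtain ⟨w, hw, hR⟩ := hforth ω ψ h v hv
    exact ⟨w, hw, (ih _ (hn ▸ weight_move_lt G hv) hR rfl).symm⟩
  · rintro ⟨w, hw, rfl⟩
    obtain ⟨v, hv, hR⟩ := hback ω ψ h w hw
    exact ⟨v, hv, ih _ (hn ▸ weight_move_lt G hv) hR rfl⟩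

lemma mem_closedNbhd_iso (e : G ≃g G') {u v : V} :
    e u ∈ closedNbhd G' (e v) ↔ u ∈ closedNbhd G v := by
  rw [mem_closedNbhd, mem_closedNbhd, e.map_adj_iff, e.injective.eq_iff]

lemma move_comp_iso (e : G ≃g G') (ω : V → Bool) (v : V) :
    move G' (ω ∘ e.symm) (e v) = move G ω v ∘ e.symm := by
  funext w
  obtain ⟨u, rfl⟩ := e.surjective w
  simp [move, mem_closedNbhd_iso]

lemma nbhdWeight_comp_iso (e : G ≃g G') (ω : V → Bool) (v : V) :
    nbhdWeight G' (ω ∘ e.symm) (e v) = nbhdWeight G ω v := by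
  have hN : closedNbhd G' (e v) = (closedNbhd G v).image e := by
    ext w
    obtain ⟨u, rfl⟩ := e.surjective w
    simp [mem_closedNbhd_iso, e.injective.eq_iff]
  rw [nbhdWeight, nbhdWeight, hN, Finset.filter_image,
    Finset.card_image_of_injective _ e.injective]
  simp

lemma isLegal_comp_iso (e : G ≃g G') (ω : V → Bool) (v : V) :
    IsLegal G' (ω ∘ e.symm) (e v) ↔ IsLegal G ω v := by
  simp only [IsLegal, move_comp_iso, nbhdWeight_comp_iso, Function.comp_apply,
    RelIso.symm_apply_apply]

lemma grundy_comp_iso (e : G ≃g G') (ω : V → Bool) :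
    grundy G' (ω ∘ e.symm) = grundy G ω := by
  refine (grundy_eq_of_bisim (fun ω ψ => ψ = ω ∘ e.symm) ?_ ?_ rfl).symm
  · rintro ω _ rfl v hv
    exact ⟨e v, (isLegal_comp_iso e ω v).mpr hv, move_comp_iso e ω v⟩
  · rintro ω _ rfl w hw
    obtain ⟨v, rfl⟩ := e.surjective w
    exact ⟨v, (isLegal_comp_iso e ω v).mp hw, move_comp_iso e ω v⟩

lemma grundy_allTrue_of_vertexTransitive (v₀ : V) (htrans : ∀ v, ∃ e : G ≃g G, e v₀ = v) :
    grundy G (fun _ => true) = mex {grundy G (move G (fun _ => true) v₀)} := by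
  rw [grundy]
  congr 1
  ext g
  simp only [Finset.mem_image, Finset.mem_attach, true_and, Subtype.exists,
    Finset.mem_filter, Finset.mem_univ, Finset.mem_singleton]
  constructor
  · rintro ⟨v, -, rfl⟩
    obtain ⟨e, rfl⟩ := htrans v
    exact (move_comp_iso e (fun _ => true) v₀ ▸ grundy_comp_iso e _ :)
  · rintro rfl
    exact ⟨v₀, isLegal_allTrue G v₀, rfl⟩

end General

lemma mex_singleton (x : ℕ) : mex {x} = if x = 0 then 1 else 0 := by
  unfold mex
  split_ifs with hx
  · subst hx
    have hone : 1 ∈ {n : ℕ | n ∉ ({0} : Finset ℕ)} := by simp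
    have hmem := Nat.sInf_mem ⟨1, hone⟩
    rw [Set.mem_ofPred_eq, Finset.mem_singleton] at hmem
    have hle := Nat.sInf_le hone
    omega
  · exact Nat.sInf_eq_zero.mpr (Or.inl (by simpa using Ne.symm hx))

/-- `H_{m+1}` on the columns `0, …, m` of `L_{2,m+1}`. On the prism, with columns `0` and `m`
identified, it is the position after the move at `w₀`. -/
def ladderStart (m : ℕ) (a : Fin 2) (i : ℕ) : Bool :=
  !decide (i = 0 ∨ m ≤ i ∨ (a = 1 ∧ (i = 1 ∨ i + 1 = m)))

/-- The position reached from `ladderStart m` by the moves `S`: a move at `(a, i)` flips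
`(a, i ± 1)` and column `i`, and this closed form counts the flips correctly since the moves of an
`IsSpaced` set are two columns apart. At `i = 0` the truncated `i - 1` is harmless: no move lies
in columns `0, 1`. -/
def ladderPos (m : ℕ) (S : Finset (Fin 2 × ℕ)) (a : Fin 2) (i : ℕ) : Bool :=
  ladderStart m a i ^^ decide ((a, i - 1) ∈ S) ^^ decide ((a, i + 1) ∈ S) ^^
    decide (∃ c, (c, i) ∈ S)

def IsSpaced (m : ℕ) (S : Finset (Fin 2 × ℕ)) : Prop :=
  (∀ p ∈ S, 2 ≤ p.2 ∧ p.2 + 2 ≤ m) ∧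
    ∀ p ∈ S, ∀ q ∈ S, p ≠ q → p.2 + 2 ≤ q.2 ∨ q.2 + 2 ≤ p.2

def InLadderNbhd (a : Fin 2) (i : ℕ) (b : Fin 2) (j : ℕ) : Prop :=
  (b = a ∧ (j = i + 1 ∨ j + 1 = i)) ∨ j = i

instance (a : Fin 2) (i : ℕ) (b : Fin 2) (j : ℕ) : Decidable (InLadderNbhd a i b j) :=
  inferInstanceAs (Decidable ((b = a ∧ (j = i + 1 ∨ j + 1 = i)) ∨ j = i))

def LadderLegal (m : ℕ) (S : Finset (Fin 2 × ℕ)) (a : Fin 2) (i : ℕ) : Prop :=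
  ladderPos m S a i = true ∧
    2 ≤ (ladderPos m S a (i + 1)).toNat + (ladderPos m S a (i - 1)).toNat +
      (ladderPos m S (a + 1) i).toNat

section Ladder

variable {m : ℕ} {S : Finset (Fin 2 × ℕ)} {a b : Fin 2} {i j : ℕ}

lemma fin_two_eq_or_eq_add_one (a b : Fin 2) : b = a ∨ b = a + 1 := by
  revert a b
  decide

lemma IsSpaced.empty : IsSpaced m ∅ := by
  simp [IsSpaced]

lemma IsSpaced.insert (hS : IsSpaced m S) (h2 : 2 ≤ i) (hm : i + 2 ≤ m)
    (hfar : ∀ p ∈ S, p.2 + 2 ≤ i ∨ i + 2 ≤ p.2) : IsSpaced m (insert (a, i) S) := by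
  refine ⟨Finset.forall_mem_insert _ _ _ |>.mpr ⟨⟨h2, hm⟩, hS.1⟩, ?_⟩
  simp only [Finset.mem_insert]
  rintro p (rfl | hp) q (rfl | hq) hpq
  · exact absurd rfl hpq
  · exact (hfar q hq).symm
  · exact hfar p hp
  · exact hS.2 p hp q hq hpq

lemma IsSpaced.notMem_of_lt (hS : IsSpaced m S) (h : j < 2 ∨ m < j + 2) : (b, j) ∉ S :=
  fun hj => by have := hS.1 _ hj; simp only at this; omega

lemma IsSpaced.notMem_of_near (hS : IsSpaced m S) (ha : (a, i) ∈ S) (hne : (b, j) ≠ (a, i))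
    (h1 : j ≤ i + 1) (h2 : i ≤ j + 1) : (b, j) ∉ S :=
  fun hj => by rcases hS.2 _ hj _ ha hne with h | h <;> simp only at h <;> omega

lemma ladderPos_zero (hS : IsSpaced m S) (a : Fin 2) : ladderPos m S a 0 = false := by
  simp [ladderPos, ladderStart, hS.notMem_of_lt (j := 0) (by omega),
    hS.notMem_of_lt (j := 1) (by omega)]

lemma ladderPos_of_le (hS : IsSpaced m S) (hi : m ≤ i) (a : Fin 2) :
    ladderPos m S a i = false := by
  simp [ladderPos, ladderStart, hi, hS.notMem_of_lt (j := i) (by omega),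
    hS.notMem_of_lt (j := i + 1) (by omega), hS.notMem_of_lt (j := i - 1) (by omega)]

lemma ladderPos_of_mem (hS : IsSpaced m S) (ha : (a, i) ∈ S) (b : Fin 2) :
    ladderPos m S b i = false := by
  obtain ⟨h2, hm⟩ := hS.1 _ ha
  have hl : (b, i - 1) ∉ S := hS.notMem_of_near ha (by simp; omega) (by omega) (by omega)
  have hr : (b, i + 1) ∉ S := hS.notMem_of_near ha (by simp) (by omega) (by omega)
  have hstart : ladderStart m b i = true := by simp [ladderStart]; omega
  have hcol : ∃ c, (c, i) ∈ S := ⟨a, ha⟩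
  simp [ladderPos, hstart, hl, hr, hcol]

lemma ladderPos_of_forall_notMem (hcol : ∀ c, (c, i) ∉ S) (a : Fin 2) :
    ladderPos m S a i =
      (ladderStart m a i ^^ decide ((a, i - 1) ∈ S) ^^ decide ((a, i + 1) ∈ S)) := by
  simp [ladderPos, hcol]

lemma ladderPos_insert (hi : 1 ≤ i) (hcol : ∀ c, (c, i) ∉ S) (b : Fin 2) (j : ℕ) :
    ladderPos m (insert (a, i) S) b j = (ladderPos m S b j ^^ decide (InLadderNbhd a i b j)) := by
  have hmem : ∀ c k, decide ((c, k) ∈ insert (a, i) S)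
      = (decide (c = a ∧ k = i) ^^ decide ((c, k) ∈ S)) := by
    intro c k
    by_cases h : c = a ∧ k = i
    · obtain ⟨rfl, rfl⟩ := h
      simp [hcol]
    · simp [Prod.ext_iff, h]
  have hcolumn : decide (∃ c, (c, j) ∈ insert (a, i) S)
      = (decide (j = i) ^^ decide (∃ c, (c, j) ∈ S)) := by
    by_cases h : j = i
    · subst h
      simp [hcol]
    · simp [Prod.ext_iff, h]
  have hnbhd : decide (InLadderNbhd a i b j)
      = (decide (b = a ∧ j - 1 = i) ^^ decide (b = a ∧ j + 1 = i) ^^ decide (j = i)) := by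
    unfold InLadderNbhd
    by_cases hb : b = a
    · by_cases h1 : j = i + 1 <;> by_cases h2 : j + 1 = i <;> by_cases h3 : j = i <;>
        simp [hb, h1, h2, h3] <;> omega
    · simp [hb]
  rw [ladderPos, ladderPos, hmem, hmem, hcolumn, hnbhd]
  simp only [Bool.xor_comm, Bool.xor_left_comm, Bool.xor_assoc]

end Ladder

section LadderMoves

variable {m : ℕ} {S : Finset (Fin 2 × ℕ)} {a b : Fin 2} {i : ℕ}

lemma LadderLegal.of_right_eq_false (h : LadderLegal m S a i)
    (hr : ladderPos m S a (i + 1) = false) :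
    ladderPos m S a (i - 1) = true ∧ ladderPos m S (a + 1) i = true := by
  have h2 := h.2
  rw [hr] at h2
  revert h2
  cases ladderPos m S a (i - 1) <;> cases ladderPos m S (a + 1) i <;> simp

lemma LadderLegal.of_left_eq_false (h : LadderLegal m S a i)
    (hl : ladderPos m S a (i - 1) = false) :
    ladderPos m S a (i + 1) = true ∧ ladderPos m S (a + 1) i = true := by
  have h2 := h.2
  rw [hl] at h2
  revert h2
  cases ladderPos m S a (i + 1) <;> cases ladderPos m S (a + 1) i <;> simp

lemma not_ladderLegal_of_mem_left (hS : IsSpaced m S) (hcol : ∀ c, (c, i) ∉ S)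
    (hb : (b, i - 1) ∈ S) : ¬ LadderLegal m S a i := by
  intro h
  obtain ⟨hb2, hbm⟩ := hS.1 _ hb
  simp only at hb2 hbm
  obtain ⟨hright, hcross⟩ := h.of_left_eq_false (ladderPos_of_mem hS hb a)
  have h0 := h.1
  rw [ladderPos_of_forall_notMem hcol] at h0 hcross
  rcases fin_two_eq_or_eq_add_one a b with rfl | rfl
  · by_cases hr : (b, i + 1) ∈ S
    · simp [ladderPos_of_mem hS hr b] at hright
    · have him : i + 1 = m := by simp [ladderStart, hb, hr] at h0; omega
      simp [ladderPos_of_le hS him.ge] at hright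
  · have hl : (a, i - 1) ∉ S := hS.notMem_of_near hb (by simp) (by omega) (by omega)
    by_cases hr : (a, i + 1) ∈ S
    · have := hS.1 _ hr
      simp [ladderStart, hl, hr] at h0
      omega
    · by_cases hr' : (a + 1, i + 1) ∈ S
      · simp [ladderPos_of_mem hS hr' a] at hright
      · by_cases him : i + 1 = m
        · simp [ladderPos_of_le hS him.ge] at hright
        · simp [ladderStart, hb, hr'] at hcross
          omega

lemma not_ladderLegal_of_mem_right (hS : IsSpaced m S) (hcol : ∀ c, (c, i) ∉ S)
    (hb : (b, i + 1) ∈ S) : ¬ LadderLegal m S a i := by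
  intro h
  obtain ⟨hb2, hbm⟩ := hS.1 _ hb
  simp only at hb2 hbm
  obtain ⟨hleft, hcross⟩ := h.of_right_eq_false (ladderPos_of_mem hS hb a)
  have h0 := h.1
  rw [ladderPos_of_forall_notMem hcol] at h0 hcross
  rcases fin_two_eq_or_eq_add_one a b with rfl | rfl
  · by_cases hl : (b, i - 1) ∈ S
    · simp [ladderPos_of_mem hS hl b] at hleft
    · have hi : i = 1 := by simp [ladderStart, hb, hl] at h0; omega
      simp [hi, ladderPos_zero hS] at hleft
  · have hr : (a, i + 1) ∉ S := hS.notMem_of_near hb (by simp) (by omega) (by omega)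
    by_cases hl : (a, i - 1) ∈ S
    · have := hS.1 _ hl
      simp [ladderStart, hl, hr] at h0
      omega
    · by_cases hl' : (a + 1, i - 1) ∈ S
      · simp [ladderPos_of_mem hS hl' a] at hleft
      · by_cases hi : i = 1
        · simp [hi, ladderPos_zero hS] at hleft
        · simp [ladderStart, hb, hl'] at hcross
          omega

lemma LadderLegal.interior_of_forall_notMem (hS : IsSpaced m S) (h : LadderLegal m S a i)
    (hl : ∀ c, (c, i - 1) ∉ S) (hcol : ∀ c, (c, i) ∉ S) (hr : ∀ c, (c, i + 1) ∉ S) :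
    2 ≤ i ∧ i + 2 ≤ m := by
  have hstart : ∀ c, ladderPos m S c i = ladderStart m c i := by
    simp [ladderPos_of_forall_notMem hcol, hl, hr]
  have h0 := h.1
  rw [hstart] at h0
  simp only [ladderStart, Bool.not_eq_eq_eq_not, Bool.not_true, decide_eq_false_iff_not] at h0
  by_contra hbd
  have ha : a = 0 := by
    rcases fin_two_eq_or_eq_add_one 0 a with rfl | rfl
    · rfl
    · exact absurd ⟨rfl, by omega⟩ fun h' => h0 (Or.inr (Or.inr h'))
  subst ha
  have hcross : ladderPos m S 1 i = false := by
    rw [hstart]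
    simp [ladderStart]
    omega
  rcases (show i = 1 ∨ i + 1 = m by omega) with hi | hi
  · simpa [hcross] using h.of_left_eq_false (by simp [hi, ladderPos_zero hS])
  · simpa [hcross] using h.of_right_eq_false (by simp [hi, ladderPos_of_le hS le_rfl])

lemma LadderLegal.interior_and_far (hS : IsSpaced m S) (h : LadderLegal m S a i) :
    2 ≤ i ∧ i + 2 ≤ m ∧ ∀ p ∈ S, p.2 + 2 ≤ i ∨ i + 2 ≤ p.2 := by
  have hcol : ∀ c, (c, i) ∉ S := fun c hc => by
    simp [LadderLegal, ladderPos_of_mem hS hc a] at h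
  have hl : ∀ c, (c, i - 1) ∉ S := fun c hc => not_ladderLegal_of_mem_left hS hcol hc h
  have hr : ∀ c, (c, i + 1) ∉ S := fun c hc => not_ladderLegal_of_mem_right hS hcol hc h
  obtain ⟨h2, hm⟩ := h.interior_of_forall_notMem hS hl hcol hr
  refine ⟨h2, hm, fun ⟨c, k⟩ hp => ?_⟩
  have : k ≠ i - 1 ∧ k ≠ i ∧ k ≠ i + 1 :=
    ⟨fun e => hl c (e ▸ hp), fun e => hcol c (e ▸ hp), fun e => hr c (e ▸ hp)⟩
  simp only
  omega

end LadderMoves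

def prismPos (m : ℕ) (S : Finset (Fin 2 × ℕ)) : Fin 2 × Fin m → Bool :=
  fun p => ladderPos m S p.1 p.2

def gridPos (m : ℕ) (S : Finset (Fin 2 × ℕ)) : Fin 2 × Fin (m + 1) → Bool :=
  fun p => ladderPos m S p.1 p.2

section Prism

variable {m : ℕ} [NeZero m] {S : Finset (Fin 2 × ℕ)}

lemma val_add_one_eq_ite (i : Fin m) :
    ((i + 1 : Fin m) : ℕ) = if (i : ℕ) + 1 = m then 0 else (i : ℕ) + 1 := by
  rw [Fin.val_add, Fin.val_one', Nat.add_mod_mod]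
  split_ifs with h
  · rw [h, Nat.mod_self]
  · exact Nat.mod_eq_of_lt (by omega)

lemma petersen_one_adj (x y : Fin 2 × Fin m) :
    (petersen m 1).Adj x y ↔
      x ≠ y ∧
        ((x.1 = y.1 ∧ (x.2 + 1 = y.2 ∨ y.2 + 1 = x.2)) ∨ (x.1 ≠ y.1 ∧ x.2 = y.2)) := by
  have hsucc : ∀ i j : Fin m, ((i : ℕ) + 1) % m = j ↔ i + 1 = j := by
    intro i j
    rw [Fin.ext_iff, Fin.val_add, Fin.val_one', Nat.add_mod_mod]
  obtain ⟨a, i⟩ := x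
  obtain ⟨b, j⟩ := y
  simp only [petersen, SimpleGraph.fromRel_adj, hsucc]
  fin_cases a <;> fin_cases b <;> simp [eq_comm]

def prismShift (c : Fin 2) (t : Fin m) : petersen m 1 ≃g petersen m 1 where
  toEquiv := (Equiv.addRight c).prodCongr (Equiv.addRight t)
  map_rel_iff' := by
    rintro ⟨a, i⟩ ⟨b, j⟩
    simp [petersen_one_adj, add_right_comm _ t (1 : Fin m)]

lemma exists_iso_petersen_one_apply_eq (v w : Fin 2 × Fin m) :
    ∃ e : petersen m 1 ≃g petersen m 1, e v = w :=
  ⟨prismShift (w.1 - v.1) (w.2 - v.2), by ext <;> simp [prismShift]⟩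

lemma mem_closedNbhd_petersen_one {a b : Fin 2} {i j : Fin m} :
    (b, j) ∈ closedNbhd (petersen m 1) (a, i) ↔
      (b = a ∧ (j = i + 1 ∨ j + 1 = i)) ∨ j = i := by
  rw [mem_closedNbhd, petersen_one_adj]
  simp only [Prod.ext_iff, ne_eq]
  by_cases hba : b = a <;> by_cases hji : j = i <;> simp [hba, hji, eq_comm] <;> tauto

lemma closedNbhd_petersen_one (a : Fin 2) (i : Fin m) :
    closedNbhd (petersen m 1) (a, i) = {(a, i), (a, i + 1), (a, i - 1), (a + 1, i)} := by
  ext ⟨b, j⟩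
  rw [mem_closedNbhd_petersen_one]
  rcases fin_two_eq_or_eq_add_one a b with rfl | rfl <;>
    simp [Prod.ext_iff, eq_sub_iff_add_eq, eq_comm, or_comm]

lemma mem_closedNbhd_petersen_one_iff_inLadderNbhd {a b : Fin 2} {i j : Fin m}
    (h1 : 1 ≤ (i : ℕ)) (h2 : (i : ℕ) + 1 < m) :
    (b, j) ∈ closedNbhd (petersen m 1) (a, i) ↔ InLadderNbhd a i b j := by
  rw [mem_closedNbhd_petersen_one, InLadderNbhd]
  simp only [Fin.ext_iff, val_add_one_eq_ite]
  split_ifs <;> omega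

lemma prismPos_empty (hm : 3 ≤ m) :
    prismPos m ∅ = move (petersen m 1) (fun _ => true) (1, 0) := by
  funext ⟨b, j⟩
  rw [move_apply]
  simp only [mem_closedNbhd_petersen_one, prismPos, ladderPos, ladderStart, Fin.ext_iff,
    val_add_one_eq_ite]
  have hj : ¬ m ≤ (j : ℕ) := not_le.mpr j.isLt
  rcases fin_two_eq_or_eq_add_one 1 b with rfl | rfl
  · simp [hj, show 1 ≠ m by omega]
    exact Bool.and_comm _ _
  · simp

lemma isLegal_prismPos_iff (hm : 3 ≤ m) (hS : IsSpaced m S) (a : Fin 2) (i : Fin m) :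
    IsLegal (petersen m 1) (prismPos m S) (a, i) ↔ LadderLegal m S a i := by
  by_cases hi : (i : ℕ) = 0
  · have h0 : ladderPos m S a i = false := by rw [hi]; exact ladderPos_zero hS a
    exact iff_of_false (fun h => by simpa [prismPos, h0] using h.1)
      (fun h => by simpa [h0] using h.1)
  have hsucc : ((i + 1 : Fin m) : ℕ) = if (i : ℕ) + 1 = m then 0 else (i : ℕ) + 1 :=
    val_add_one_eq_ite i
  have hpred : ((i - 1 : Fin m) : ℕ) = (i : ℕ) - 1 :=
    Fin.val_sub_one_of_ne_zero fun h => hi (by rw [h, Fin.val_zero])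
  have hnext : prismPos m S (a, i + 1) = ladderPos m S a (i + 1) := by
    by_cases h : (i : ℕ) + 1 = m
    · simp [prismPos, hsucc, h, ladderPos_zero hS, ladderPos_of_le hS le_rfl]
    · simp [prismPos, hsucc, h]
  have hcol : i ≠ i + 1 ∧ i ≠ i - 1 ∧ i + 1 ≠ i - 1 := by
    simp only [ne_eq, Fin.ext_iff, hsucc, hpred]
    split_ifs <;> omega
  rw [isLegal_iff_of_closedNbhd_eq _ (closedNbhd_petersen_one a i), hnext]
  · simp only [prismPos, hpred, LadderLegal]
  all_goals simp [hcol.1, hcol.2.1, hcol.2.2]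

lemma move_prismPos (a : Fin 2) (i : Fin m) (h1 : 1 ≤ (i : ℕ)) (h2 : (i : ℕ) + 1 < m)
    (hcol : ∀ c, (c, (i : ℕ)) ∉ S) :
    move (petersen m 1) (prismPos m S) (a, i) = prismPos m (insert (a, (i : ℕ)) S) := by
  funext ⟨b, j⟩
  simp only [move_apply, mem_closedNbhd_petersen_one_iff_inLadderNbhd h1 h2, prismPos,
    ladderPos_insert h1 hcol]

end Prism

section Grid

variable {m n : ℕ} {S : Finset (Fin 2 × ℕ)}

lemma mem_closedNbhd_gridGraph {a b : Fin 2} {i j : Fin n} :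
    (b, j) ∈ closedNbhd (gridGraph n) (a, i) ↔ InLadderNbhd a i b j := by
  rw [mem_closedNbhd, gridGraph, SimpleGraph.fromRel_adj, InLadderNbhd]
  simp only [Prod.ext_iff, ne_eq, Fin.ext_iff]
  fin_cases a <;> fin_cases b <;> simp <;> omega

lemma closedNbhd_gridGraph (a : Fin 2) (i : Fin n) (h1 : 1 ≤ (i : ℕ)) (h2 : (i : ℕ) + 1 < n) :
    closedNbhd (gridGraph n) (a, i) =
      {(a, i), (a, ⟨i + 1, h2⟩), (a, ⟨i - 1, by omega⟩), (a + 1, i)} := by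
  ext ⟨b, j⟩
  rw [mem_closedNbhd_gridGraph, InLadderNbhd]
  rcases fin_two_eq_or_eq_add_one a b with rfl | rfl
  · simp [Prod.ext_iff, Fin.ext_iff]
    omega
  · simp [Prod.ext_iff, Fin.ext_iff]

lemma isLegal_gridPos_iff (hS : IsSpaced m S) (a : Fin 2) (j : Fin (m + 1)) :
    IsLegal (gridGraph (m + 1)) (gridPos m S) (a, j) ↔ LadderLegal m S a j := by
  by_cases hj : (j : ℕ) = 0 ∨ m ≤ (j : ℕ)
  · have h0 : ladderPos m S a j = false := by
      rcases hj with hj | hj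
      · rw [hj]; exact ladderPos_zero hS a
      · exact ladderPos_of_le hS hj a
    exact iff_of_false (fun h => by simpa [gridPos, h0] using h.1)
      (fun h => by simpa [h0] using h.1)
  rw [isLegal_iff_of_closedNbhd_eq _ (closedNbhd_gridGraph a j (by omega) (by omega))]
  · rfl
  all_goals simp [Fin.ext_iff] <;> omega

lemma move_gridPos (a : Fin 2) (j : Fin (m + 1)) (h1 : 1 ≤ (j : ℕ))
    (hcol : ∀ c, (c, (j : ℕ)) ∉ S) :
    move (gridGraph (m + 1)) (gridPos m S) (a, j) = gridPos m (insert (a, (j : ℕ)) S) := by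
  funext ⟨b, k⟩
  simp only [move_apply, mem_closedNbhd_gridGraph, gridPos, ladderPos_insert h1 hcol]

lemma gridPos_empty (hm : 3 ≤ m) : gridPos m ∅ = Hpos (m + 1) := by
  funext ⟨b, j⟩
  have hj := j.isLt
  simp only [gridPos, ladderPos, ladderStart, Hpos, show m + 1 ≠ 3 by omega]
  rw [Bool.eq_iff_iff]
  have h0 : j = 0 ↔ (j : ℕ) = 0 := Fin.ext_iff
  rcases fin_two_eq_or_eq_add_one 1 b with rfl | rfl <;> simp <;> simp only [h0] <;> omega

end Grid

lemma LadderLegal.step {m : ℕ} [NeZero m] {S : Finset (Fin 2 × ℕ)} {a : Fin 2} {i : ℕ}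
    (hS : IsSpaced m S) (h : LadderLegal m S a i) :
    ∃ hi : i + 2 ≤ m, IsSpaced m (insert (a, i) S) ∧
      move (petersen m 1) (prismPos m S) (a, ⟨i, by omega⟩) = prismPos m (insert (a, i) S) ∧
      move (gridGraph (m + 1)) (gridPos m S) (a, ⟨i, by omega⟩) =
        gridPos m (insert (a, i) S) := by
  obtain ⟨h2, hm, hfar⟩ := h.interior_and_far hS
  have hcol : ∀ c, (c, i) ∉ S := fun c hc => by have := hfar _ hc; omega
  exact ⟨hm, hS.insert h2 hm hfar, move_prismPos a ⟨i, _⟩ (by simp only; omega)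
    (by simp only; omega) hcol, move_gridPos a ⟨i, _⟩ (by simp only; omega) hcol⟩

lemma grundy_prismPos_eq_gridPos {m : ℕ} [NeZero m] (hm : 3 ≤ m) {S : Finset (Fin 2 × ℕ)}
    (hS : IsSpaced m S) :
    grundy (petersen m 1) (prismPos m S) = grundy (gridGraph (m + 1)) (gridPos m S) := by
  refine grundy_eq_of_bisim
    (fun ω ψ => ∃ S, IsSpaced m S ∧ ω = prismPos m S ∧ ψ = gridPos m S) ?_ ?_ ⟨S, hS, rfl, rfl⟩
  · rintro _ _ ⟨S, hS, rfl, rfl⟩ ⟨a, i⟩ hlegal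
    rw [isLegal_prismPos_iff hm hS] at hlegal
    obtain ⟨hi, hS', hprism, hgrid⟩ := hlegal.step hS
    exact ⟨(a, ⟨i, by omega⟩), (isLegal_gridPos_iff hS a _).mpr hlegal, _, hS', hprism,
      hgrid⟩
  · rintro _ _ ⟨S, hS, rfl, rfl⟩ ⟨a, j⟩ hlegal
    rw [isLegal_gridPos_iff hS] at hlegal
    obtain ⟨hj, hS', hprism, hgrid⟩ := hlegal.step hS
    exact ⟨(a, ⟨j, by omega⟩), (isLegal_prismPos_iff hm hS a _).mpr hlegal, _, hS', hprism,
      hgrid⟩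

lemma grundy_petersen_one_P11 {m : ℕ} (hm : 3 ≤ m) :
    grundy (petersen m 1) (P11 m) = mex {GH (m + 1)} := by
  have : NeZero m := ⟨by omega⟩
  unfold P11
  rw [grundy_allTrue_of_vertexTransitive (1, 0) (exists_iso_petersen_one_apply_eq (1, 0)),
    ← prismPos_empty hm, grundy_prismPos_eq_gridPos hm IsSpaced.empty, gridPos_empty hm, GH]

end Toggle

/-- for `m ≥ 3`, the Nimber of the all-ones Toggle position on `P(m,1)`
equals `mex {G(H_{m+1})}`; equivalently, it is `1` if `G(H_{m+1}) = 0` and `0`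
otherwise. -/
theorem statement4 (m : ℕ) (hm : 3 ≤ m) :
    Toggle.grundy (Toggle.petersen m 1) (Toggle.P11 m)
        = Toggle.mex {Toggle.GH (m + 1)} ∧
    Toggle.grundy (Toggle.petersen m 1) (Toggle.P11 m)
        = (if Toggle.GH (m + 1) = 0 then 1 else 0) := by
  have hG := Toggle.grundy_petersen_one_P11 hm
  exact ⟨hG, hG.trans (Toggle.mex_singleton _)⟩
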